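/- Let τ₀ > 0, a ∈ (−1,1), and let N : [0,τ₀] → ℝ be piecewise continuous. Then the set {s ∈ ℂ : Re(s) ≥ 0 and F₀(s) = 0} is finite, where F₀(s) = 1 − a·exp(−τ₀s) − ∫₀^{τ₀} N(ν)exp(−νs)dν. -/

import Mathlib

open MeasureTheory Set

noncomputable section

/-- `f` is piecewise continuous on `[a,b]`: continuous off a finite set and bounded. -/
def PwContOn (f : ℝ → ℝ) (a b : ℝ) : Prop :=
  (∃ S : Finset ℝ, ContinuousOn f (Set.Icc a b \ ↑S)) ∧
    ∃ C : ℝ, ∀ x ∈ Set.Icc a b, |f x| ≤ C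

/-- `f` is piecewise continuously differentiable on `[a,b]`. -/
def PwC1On (f : ℝ → ℝ) (a b : ℝ) : Prop :=
  PwContOn f a b ∧
    ∃ S : Finset ℝ, DifferentiableOn ℝ f (Set.Icc a b \ ↑S) ∧ PwContOn (deriv f) a b

/-- Sup norm of the partial trajectory `θ ∈ [-τ,0] ↦ φ(t+θ)`. -/
def wNorm (φ : ℝ → ℝ) (τ t : ℝ) : ℝ :=
  sSup ((fun θ => |φ (t + θ)|) '' Set.Icc (-τ) 0)

/-- `F₀(s) = 1 - a e^{-τ₀ s} - ∫₀^{τ₀} N(ν) e^{-ν s} dν`. -/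
def F0 (a τ₀ : ℝ) (N : ℝ → ℝ) (s : ℂ) : ℂ :=
  1 - (a : ℂ) * Complex.exp (-(τ₀ : ℂ) * s)
    - ∫ ν in (0:ℝ)..τ₀, (N ν : ℂ) * Complex.exp (-(ν : ℂ) * s)

/-- `F₁(s) = b e^{-τ₁ s} + ∫₀^{τ₁} M(ν) e^{-ν s} dν`. -/
def F1 (b τ₁ : ℝ) (M : ℝ → ℝ) (s : ℂ) : ℂ :=
  (b : ℂ) * Complex.exp (-(τ₁ : ℂ) * s)
    + ∫ ν in (0:ℝ)..τ₁, (M ν : ℂ) * Complex.exp (-(ν : ℂ) * s)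

/-- `I₁(ν)`, for `ν ∈ [0,τ₀]`. -/
def I1 (N M f g : ℝ → ℝ) (ν : ℝ) : ℝ :=
  g ν + N ν + (∫ η in (0:ℝ)..ν, f η * M (ν - η)) - ∫ η in (0:ℝ)..ν, g η * N (ν - η)

/-- `I₂(ν)`, for `ν ∈ (τ₀,τ₁]`. -/
def I2 (a τ₀ : ℝ) (N M f g : ℝ → ℝ) (ν : ℝ) : ℝ :=
  g ν - a * g (ν - τ₀) + (∫ η in (0:ℝ)..τ₀, f η * M (ν - η))
    - ∫ η in (ν - τ₀)..ν, g η * N (ν - η)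

/-- `I₃(ν)`, for `ν ∈ [τ₁,τ₀+τ₁]`. -/
def I3 (a b τ₀ τ₁ : ℝ) (N M f g : ℝ → ℝ) (ν : ℝ) : ℝ :=
  b * f (ν - τ₁) + (∫ η in (ν - τ₁)..τ₀, f η * M (ν - η))
    - a * g (ν - τ₀) - ∫ η in (ν - τ₀)..τ₁, g η * N (ν - η)


open Filter Topology Interval Bornology

/-!
Write `L(s) = ∫₀^τ₀ N(ν) e^{-νs} dν`, so that `F₀(s) = 1 - a e^{-τ₀ s} - L(s)`. On the closed
right half-plane `|a e^{-τ₀ s}| ≤ |a| < 1`, while `L(s) → 0` as `|s| → ∞`: for `Re s → ∞` by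
dominated convergence, and for `Re s` in a compact interval `K` by the Riemann–Lebesgue lemma,
which holds uniformly for `Re s ∈ K` because `L` is Lipschitz on the half-plane (Arzelà–Ascoli).
So the zeros of `F₀` in the half-plane lie in a compact disc, and the entire function `F₀ ≢ 0`
has only finitely many zeros there.
-/

theorem Complex.norm_exp_sub_exp_le {z w : ℂ} (hz : z.re ≤ 0) (hw : w.re ≤ 0) :
    ‖exp z - exp w‖ ≤ ‖z - w‖ := by
  simpa using (convex_halfSpace_re_le (0 : ℝ)).norm_image_sub_le_of_norm_deriv_le
    (f := exp) (C := 1) (fun _ _ => differentiableAt_exp)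
    (fun x hx => by rw [deriv_exp, norm_exp]; exact Real.exp_le_one_iff.2 hx) hw hz

theorem IntervalIntegrable.ofReal {f : ℝ → ℝ} {a b : ℝ} {μ : Measure ℝ}
    (hf : IntervalIntegrable f μ a b) : IntervalIntegrable (fun x => (f x : ℂ)) μ a b :=
  ⟨Integrable.ofReal hf.1, Integrable.ofReal hf.2⟩

theorem PwContOn.intervalIntegrable {f : ℝ → ℝ} {a b : ℝ} (hf : PwContOn f a b) (hab : a ≤ b) :
    IntervalIntegrable f volume a b := by
  obtain ⟨⟨S, hS⟩, C, hC⟩ := hf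
  have hmeas : AEStronglyMeasurable f (volume.restrict (Icc a b)) := by
    rw [← Measure.restrict_congr_set (sdiff_null_ae_eq_self (S.finite_toSet.measure_zero _))]
    exact hS.aestronglyMeasurable (measurableSet_Icc.diff S.finite_toSet.measurableSet)
  rw [intervalIntegrable_iff_integrableOn_Icc_of_le hab]
  exact .of_bound measure_Icc_lt_top hmeas C
    ((ae_restrict_iff' measurableSet_Icc).2 (.of_forall hC))

theorem Differentiable.finite_setOf_zero_of_isCompact {E : Type*} [NormedAddCommGroup E]
    [NormedSpace ℂ E] [CompleteSpace E] {f : ℂ → E} (hf : Differentiable ℂ f) {z₀ : ℂ}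
    (hz₀ : f z₀ ≠ 0) {K : Set ℂ} (hK : IsCompact K) : {z ∈ K | f z = 0}.Finite := by
  obtain h | h := (Complex.analyticOnNhd_univ_iff_differentiable.2 hf)
    |>.eqOn_zero_or_eventually_ne_zero_of_preconnected isPreconnected_univ
  · exact absurd (h (mem_univ z₀)) hz₀
  · convert hK.finite_sdiff_of_mem_codiscreteWithin (codiscreteWithin_mono (subset_univ K) h)
      using 1
    ext z
    simp

def finiteLaplace (f : ℝ → ℂ) (τ : ℝ) (s : ℂ) : ℂ :=
  ∫ ν in (0:ℝ)..τ, f ν * Complex.exp (-(ν : ℂ) * s)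

theorem norm_cexp_neg_ofReal_mul (ν : ℝ) (s : ℂ) :
    ‖Complex.exp (-(ν : ℂ) * s)‖ = Real.exp (-(ν * s.re)) := by
  simp [Complex.norm_exp]

theorem finiteLaplace_add (f : ℝ → ℂ) (τ : ℝ) (z s : ℂ) :
    finiteLaplace f τ (z + s) = finiteLaplace (fun ν => f ν * Complex.exp (-(ν : ℂ) * z)) τ s := by
  simp only [finiteLaplace, mul_add, neg_mul, Complex.exp_add, mul_assoc]

theorem tendsto_finiteLaplace_mul_I_cocompact (f : ℝ → ℂ) (τ : ℝ) :
    Tendsto (fun t : ℝ => finiteLaplace f τ (t * Complex.I)) (cocompact ℝ) (𝓝 0) := by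
  -- `𝓕` integrates against `e^{-2πivw}`, so `t = 2πw`; the sign is the orientation of `0..τ`.
  have hRL := ((Real.zero_at_infty_fourier ((Ι 0 τ).indicator f)).comp
    (tendsto_cocompact_mul_right₀ (inv_ne_zero Real.two_pi_pos.ne'))).const_smul
      (if 0 ≤ τ then 1 else -1 : ℝ)
  rw [smul_zero] at hRL
  refine hRL.congr fun t => ?_
  rw [Function.comp_apply, Real.fourier_real_eq_integral_exp_smul, finiteLaplace,
    intervalIntegral.intervalIntegral_eq_integral_uIoc, ← integral_indicator measurableSet_uIoc]
  congr 2 with ν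
  by_cases hν : ν ∈ Ι 0 τ
  · simp only [indicator_of_mem hν, smul_eq_mul]
    rw [mul_comm]
    congr 2
    push_cast
    field_simp
  · simp [indicator_of_notMem hν]

section

variable {f : ℝ → ℂ} {τ : ℝ}

theorem intervalIntegrable_mul_cexp (hf : IntervalIntegrable f volume 0 τ) (s : ℂ) :
    IntervalIntegrable (fun ν : ℝ => f ν * Complex.exp (-(ν : ℂ) * s)) volume 0 τ :=
  hf.mul_continuousOn (by fun_prop)

theorem lipschitzOnWith_finiteLaplace (hf : IntervalIntegrable f volume 0 τ) (hτ : 0 ≤ τ) :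
    LipschitzOnWith (Real.toNNReal (τ * ∫ ν in (0:ℝ)..τ, ‖f ν‖)) (finiteLaplace f τ)
      {s | 0 ≤ s.re} := by
  refine LipschitzOnWith.of_dist_le' fun s hs s' hs' => ?_
  rw [dist_eq_norm, dist_eq_norm, finiteLaplace, finiteLaplace,
    ← intervalIntegral.integral_sub (intervalIntegrable_mul_cexp hf s)
      (intervalIntegrable_mul_cexp hf s')]
  have hpt : ∀ ν ∈ Ioc 0 τ, ‖f ν * Complex.exp (-(ν : ℂ) * s) - f ν * Complex.exp (-(ν : ℂ) * s')‖
      ≤ ‖f ν‖ * (τ * ‖s - s'‖) := fun ν hν => by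
    have hre : ∀ z : ℂ, 0 ≤ z.re → (-(ν : ℂ) * z).re ≤ 0 := fun z hz => by
      simpa using mul_nonneg hν.1.le hz
    rw [← mul_sub, norm_mul]
    gcongr
    calc _ ≤ ‖-(ν : ℂ) * s - -(ν : ℂ) * s'‖ := Complex.norm_exp_sub_exp_le (hre s hs) (hre s' hs')
      _ = ν * ‖s - s'‖ := by rw [← mul_sub, norm_mul, norm_neg, Complex.norm_real,
          Real.norm_of_nonneg hν.1.le]
      _ ≤ τ * ‖s - s'‖ := by gcongr; exact hν.2
  calc _ ≤ ∫ ν in (0:ℝ)..τ, ‖f ν‖ * (τ * ‖s - s'‖) :=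
        intervalIntegral.norm_integral_le_of_norm_le hτ (.of_forall hpt) (hf.norm.mul_const _)
    _ = _ := by rw [intervalIntegral.integral_mul_const]; ring

theorem tendsto_finiteLaplace_comap_re_atTop (hf : IntervalIntegrable f volume 0 τ)
    (hτ : 0 ≤ τ) : Tendsto (finiteLaplace f τ) (comap Complex.re atTop) (𝓝 0) := by
  have hΙ : Ι 0 τ = Ioc 0 τ := uIoc_of_le hτ
  have hre : ∀ᶠ s in comap Complex.re atTop, 0 ≤ s.re :=
    tendsto_comap.eventually (eventually_ge_atTop 0)
  have := intervalIntegral.tendsto_integral_filter_of_dominated_convergence (f := fun _ => 0)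
    (F := fun s ν => f ν * Complex.exp (-(ν : ℂ) * s)) (fun ν => ‖f ν‖)
    (.of_forall fun s => (intervalIntegrable_mul_cexp hf s).def'.aestronglyMeasurable)
    (hre.mono fun s hs => .of_forall fun ν hν => by
      rw [hΙ] at hν
      rw [norm_mul, norm_cexp_neg_ofReal_mul]
      exact mul_le_of_le_one_right (norm_nonneg _)
        (Real.exp_le_one_iff.2 (by simpa using mul_nonneg hν.1.le hs)))
    hf.norm
    (.of_forall fun ν hν => by
      rw [hΙ] at hν
      rw [tendsto_zero_iff_norm_tendsto_zero]
      simp only [norm_mul, norm_cexp_neg_ofReal_mul]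
      simpa using (Real.tendsto_exp_atBot.comp (tendsto_neg_atTop_atBot.comp
        (tendsto_comap.const_mul_atTop hν.1))).const_mul ‖f ν‖)
  rwa [intervalIntegral.integral_zero] at this

theorem differentiable_finiteLaplace (hf : IntervalIntegrable f volume 0 τ) :
    Differentiable ℂ (finiteLaplace f τ) := by
  intro s₀
  have hderiv : ∀ (ν : ℝ) (s : ℂ), HasDerivAt (fun s => f ν * Complex.exp (-(ν : ℂ) * s))
      (f ν * Complex.exp (-(ν : ℂ) * s) * -ν) s := fun ν s =>
    ((((hasDerivAt_id s).const_mul (-(ν : ℂ))).cexp).const_mul (f ν)).congr_deriv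
      (by simp only [id, mul_one]; ring)
  have hbound : ∀ ν ∈ Ι 0 τ, ∀ s ∈ Metric.ball s₀ 1, ‖f ν * Complex.exp (-(ν : ℂ) * s) * -ν‖
      ≤ ‖f ν‖ * (Real.exp (|τ| * (‖s₀‖ + 1)) * |τ|) := fun ν hν s hs => by
    have hν' : |ν| ≤ |τ| := by simpa using abs_sub_left_of_mem_uIcc (uIoc_subset_uIcc hν)
    have hs' : ‖s‖ ≤ ‖s₀‖ + 1 := (norm_le_norm_add_norm_sub' s s₀).trans
      (by rw [← dist_eq_norm]; linarith [Metric.mem_ball.1 hs])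
    rw [norm_mul, norm_mul, mul_assoc, norm_neg, Complex.norm_real, Real.norm_eq_abs]
    gcongr
    calc _ ≤ Real.exp ‖-(ν : ℂ) * s‖ := Complex.norm_exp_le_exp_norm _
      _ ≤ _ := by
        rw [norm_mul, norm_neg, Complex.norm_real, Real.norm_eq_abs]
        gcongr
  exact (intervalIntegral.hasDerivAt_integral_of_dominated_loc_of_deriv_le
    (Metric.ball_mem_nhds s₀ one_pos)
    (.of_forall fun s => (intervalIntegrable_mul_cexp hf s).def'.aestronglyMeasurable)
    (intervalIntegrable_mul_cexp hf s₀)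
    ((intervalIntegrable_mul_cexp hf s₀).def'.aestronglyMeasurable.mul
      (by fun_prop : Continuous fun ν : ℝ => -(ν : ℂ)).aestronglyMeasurable)
    (.of_forall hbound) (hf.norm.mul_const _)
    (.of_forall fun ν _ s _ => hderiv ν s)).2.differentiableAt

theorem tendstoUniformlyOn_finiteLaplace_add_mul_I (hf : IntervalIntegrable f volume 0 τ)
    (hτ : 0 ≤ τ) {K : Set ℝ} (hK : IsCompact K) (hK₀ : K ⊆ Ici 0) :
    TendstoUniformlyOn (fun (t σ : ℝ) => finiteLaplace f τ (σ + t * Complex.I)) 0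
      (cocompact ℝ) K := by
  have hlip : ∀ t : ℝ, LipschitzOnWith _ (fun σ : ℝ => finiteLaplace f τ (σ + t * Complex.I)) K :=
    fun t => (lipschitzOnWith_finiteLaplace hf hτ).comp
      ((IsometryEquiv.addRight _).isometry.comp Complex.isometry_ofReal).lipschitz.lipschitzOnWith
      fun σ hσ => by simpa using hK₀ hσ
  have hpi := (EquicontinuousOn.tendsto_uniformOnFun_iff_pi' (𝔖 := {K}) (by simpa using hK)
    (by simpa using ((LipschitzOnWith.uniformEquicontinuousOn _ _ hlip).equicontinuousOn))
    (cocompact ℝ) 0).2 (tendsto_pi_nhds.2 fun σ => by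
      simpa [finiteLaplace_add] using tendsto_finiteLaplace_mul_I_cocompact _ τ)
  exact UniformOnFun.tendsto_iff_tendstoUniformlyOn.1 hpi K rfl

theorem tendsto_finiteLaplace_cobounded (hf : IntervalIntegrable f volume 0 τ) (hτ : 0 ≤ τ) :
    Tendsto (finiteLaplace f τ) (cobounded ℂ ⊓ 𝓟 {s | 0 ≤ s.re}) (𝓝 0) := by
  rw [Metric.tendsto_nhds]
  intro ε hε
  obtain ⟨B, hB⟩ : ∃ B, ∀ s : ℂ, B ≤ s.re → dist (finiteLaplace f τ s) 0 < ε := by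
    obtain ⟨B, hB⟩ := eventually_atTop.1 (eventually_comap.1
      (Metric.tendsto_nhds.1 (tendsto_finiteLaplace_comap_re_atTop hf hτ) ε hε))
    exact ⟨B, fun s hs => hB _ hs s rfl⟩
  obtain ⟨T, -, hT⟩ := (hasBasis_cobounded_norm.eventually_iff).1 <|
    Metric.cobounded_eq_cocompact (α := ℝ) ▸ Metric.tendstoUniformlyOn_iff.1
      (tendstoUniformlyOn_finiteLaplace_add_mul_I (K := Icc 0 B) hf hτ isCompact_Icc
        Icc_subset_Ici_self)
      ε hε
  rw [eventually_inf_principal, hasBasis_cobounded_norm.eventually_iff]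
  refine ⟨B + T, trivial, fun s hs hre => ?_⟩
  by_cases hBs : B ≤ s.re
  · exact hB s hBs
  have hT' : T ≤ ‖s.im‖ := by
    have := Complex.norm_le_abs_re_add_abs_im s
    rw [abs_of_nonneg hre] at this
    rw [Real.norm_eq_abs]
    linarith [show B + T ≤ ‖s‖ from hs]
  simpa [dist_comm, Complex.re_add_im] using hT hT' s.re ⟨hre, (not_le.1 hBs).le⟩

end

theorem F0_eq_sub_finiteLaplace (a τ₀ : ℝ) (N : ℝ → ℝ) :
    F0 a τ₀ N = fun s => 1 - a * Complex.exp (-(τ₀ : ℂ) * s) - finiteLaplace (N ·) τ₀ s :=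
  rfl

theorem eventually_F0_ne_zero {a τ₀ : ℝ} {N : ℝ → ℝ} (hτ₀ : 0 ≤ τ₀) (ha : |a| < 1)
    (hN : IntervalIntegrable N volume 0 τ₀) :
    ∀ᶠ s in cobounded ℂ ⊓ 𝓟 {s | 0 ≤ s.re}, F0 a τ₀ N s ≠ 0 := by
  filter_upwards [(tendsto_zero_iff_norm_tendsto_zero.1
      (tendsto_finiteLaplace_cobounded hN.ofReal hτ₀)).eventually (gt_mem_nhds (sub_pos.2 ha)),
    mem_inf_of_right (mem_principal_self _)] with s hL hs
  have hexp : ‖(a : ℂ) * Complex.exp (-(τ₀ : ℂ) * s)‖ ≤ |a| := by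
    rw [norm_mul, Complex.norm_real, Real.norm_eq_abs, norm_cexp_neg_ofReal_mul]
    exact mul_le_of_le_one_right (abs_nonneg a)
      (Real.exp_le_one_iff.2 (by simpa using mul_nonneg hτ₀ hs))
  rw [F0_eq_sub_finiteLaplace, ← norm_pos_iff]
  calc 0 < 1 - |a| - ‖finiteLaplace (N ·) τ₀ s‖ := by linarith
    _ ≤ ‖1 - a * Complex.exp (-(τ₀ : ℂ) * s) - finiteLaplace (N ·) τ₀ s‖ := by
      have h1 := norm_sub_norm_le (1 : ℂ) (a * Complex.exp (-(τ₀ : ℂ) * s))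
      have h2 := norm_sub_norm_le (1 - a * Complex.exp (-(τ₀ : ℂ) * s)) (finiteLaplace (N ·) τ₀ s)
      rw [norm_one] at h1
      linarith

/-- **Finitely many unstable roots of the open loop.** If `|a| < 1`, the set of roots of
`F₀` in the closed right half-plane is finite. -/
theorem stmt18
    (τ₀ a : ℝ) (N : ℝ → ℝ)
    (hτ₀ : 0 < τ₀) (ha : -1 < a ∧ a < 1)
    (hN : PwContOn N 0 τ₀) :
    {s : ℂ | 0 ≤ s.re ∧ F0 a τ₀ N s = 0}.Finite := by
  have hN' := hN.intervalIntegrable hτ₀.le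
  obtain ⟨R, -, hR⟩ := hasBasis_cobounded_norm.eventually_iff.1 <| eventually_inf_principal.1 <|
    eventually_F0_ne_zero hτ₀.le (abs_lt.2 ha) hN'
  have hF0 : Differentiable ℂ (F0 a τ₀ N) := by
    rw [F0_eq_sub_finiteLaplace]
    exact ((differentiable_const _).sub (by fun_prop)).sub
      (differentiable_finiteLaplace hN'.ofReal)
  refine (hF0.finite_setOf_zero_of_isCompact (z₀ := (|R| : ℝ))
    (hR (by simp [le_abs_self]) (by simp))
    (isCompact_closedBall 0 R)).subset fun s ⟨hs, hz⟩ =>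
      ⟨mem_closedBall_zero_iff.2 (not_le.1 fun h => hR h hs hz).le, hz⟩
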